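/- Let X be a Banach space and let (F_n) be a decreasing sequence of spear sets in B_X whose diameters tend to zero. If z belongs to the intersection of all F_n, then z is a spear vector, i.e. ‖z + 𝕋x‖ = 1 + ‖x‖ for all x ∈ X. -/

import Mathlib

open Metric Filter

/-- A spear set: `‖F + 𝕋x‖ = 1 + ‖x‖` for every `x ∈ X`. -/
def IsSpearSet (𝕜 : Type*) {X : Type*} [RCLike 𝕜] [NormedAddCommGroup X]
    [NormedSpace 𝕜 X] (F : Set X) : Prop :=
  ∀ x : X, sSup {r : ℝ | ∃ z ∈ F, ∃ ω : 𝕜, ‖ω‖ = 1 ∧ r = ‖z + ω • x‖} = 1 + ‖x‖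

/-- A spear vector: `z ∈ S_X` with `‖z + 𝕋x‖ = 1 + ‖x‖` for every `x ∈ X`. -/
def IsSpear (𝕜 : Type*) {X : Type*} [RCLike 𝕜] [NormedAddCommGroup X]
    [NormedSpace 𝕜 X] (z : X) : Prop :=
  ‖z‖ = 1 ∧ ∀ x : X, sSup {r : ℝ | ∃ ω : 𝕜, ‖ω‖ = 1 ∧ r = ‖z + ω • x‖} = 1 + ‖x‖

/-!
Every `z' ∈ F` lies within `diam F` of `z`, so moving from `z'` to `z` costs at most `diam F`
in `‖z' + ω • x‖`; hence a spear set `F ∋ z` already forces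
`sup_ω ‖z + ω • x‖ ≥ 1 + ‖x‖ - diam F`, and letting the diameters tend to zero gives the claim.
-/

namespace IsSpearSet

variable {𝕜 X : Type*} [RCLike 𝕜] [NormedAddCommGroup X] [NormedSpace 𝕜 X] {F : Set X}

/-- Real `sSup` of an unbounded set is `0 < 1 + ‖x‖`, so the spear equation forces boundedness. -/
theorem bddAbove (hF : IsSpearSet 𝕜 F) (x : X) :
    BddAbove {r : ℝ | ∃ z ∈ F, ∃ ω : 𝕜, ‖ω‖ = 1 ∧ r = ‖z + ω • x‖} := by
  by_contra h
  have h0 := hF x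
  rw [Real.sSup_of_not_bddAbove h] at h0
  linarith [norm_nonneg x]

theorem norm_add_smul_le (hF : IsSpearSet 𝕜 F) {z : X} (hz : z ∈ F) (x : X) {ω : 𝕜}
    (hω : ‖ω‖ = 1) : ‖z + ω • x‖ ≤ 1 + ‖x‖ :=
  hF x ▸ le_csSup (hF.bddAbove x) ⟨z, hz, ω, hω, rfl⟩

theorem subset_closedBall (hF : IsSpearSet 𝕜 F) : F ⊆ closedBall 0 1 := fun z hz => by
  simpa using hF.norm_add_smul_le hz 0 (norm_one (α := 𝕜))

theorem one_add_norm_sub_diam_le (hF : IsSpearSet 𝕜 F) {z : X} (hz : z ∈ F) (x : X) :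
    1 + ‖x‖ - diam F ≤ sSup {r : ℝ | ∃ ω : 𝕜, ‖ω‖ = 1 ∧ r = ‖z + ω • x‖} := by
  have hbdd : BddAbove {r : ℝ | ∃ ω : 𝕜, ‖ω‖ = 1 ∧ r = ‖z + ω • x‖} :=
    ⟨1 + ‖x‖, by rintro _ ⟨ω, hω, rfl⟩; exact hF.norm_add_smul_le hz x hω⟩
  rw [← hF x, sub_le_iff_le_add]
  refine csSup_le ⟨_, z, hz, 1, norm_one, rfl⟩ ?_
  rintro _ ⟨z', hz', ω, hω, rfl⟩
  have hdist : dist z' z ≤ diam F :=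
    dist_le_diam_of_mem (isBounded_closedBall.subset hF.subset_closedBall) hz' hz
  calc ‖z' + ω • x‖ ≤ ‖z + ω • x‖ + dist z' z := by
        rw [dist_eq_norm, ← add_sub_add_right_eq_sub z' z (ω • x)]
        exact norm_le_insert' _ _
    _ ≤ sSup {r : ℝ | ∃ ω : 𝕜, ‖ω‖ = 1 ∧ r = ‖z + ω • x‖} + diam F :=
        add_le_add (le_csSup hbdd ⟨ω, hω, rfl⟩) hdist

end IsSpearSet

theorem stmt2_general {𝕜 X : Type*} [RCLike 𝕜] [NormedAddCommGroup X] [NormedSpace 𝕜 X]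
    (F : ℕ → Set X) (hspear : ∀ n, IsSpearSet 𝕜 (F n))
    (hdiam : Tendsto (fun n => Metric.diam (F n)) atTop (nhds 0))
    (z : X) (hz : z ∈ ⋂ n, F n) :
    IsSpear 𝕜 z := by
  have hzF : ∀ n, z ∈ F n := Set.mem_iInter.mp hz
  have hsup (x : X) : sSup {r : ℝ | ∃ ω : 𝕜, ‖ω‖ = 1 ∧ r = ‖z + ω • x‖} = 1 + ‖x‖ := by
    refine le_antisymm (csSup_le ⟨_, 1, norm_one, rfl⟩ ?_) ?_
    · rintro _ ⟨ω, hω, rfl⟩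
      exact (hspear 0).norm_add_smul_le (hzF 0) x hω
    · have hlim := (tendsto_const_nhds (x := 1 + ‖x‖)).sub hdiam
      rw [sub_zero] at hlim
      exact le_of_tendsto' hlim fun n => (hspear n).one_add_norm_sub_diam_le (hzF n) x
  refine ⟨?_, hsup⟩
  simpa [show ∃ ω : 𝕜, ‖ω‖ = 1 from ⟨1, norm_one⟩] using hsup 0

/-- if `(F n)` is a decreasing sequence of spear sets of `B_X` whose diameters
tend to zero and `z ∈ ⋂ n, F n`, then `z` is a spear vector. -/
theorem stmt2 {𝕜 X : Type*} [RCLike 𝕜] [NormedAddCommGroup X] [NormedSpace 𝕜 X]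
    [CompleteSpace X] (F : ℕ → Set X) (hFball : ∀ n, F n ⊆ closedBall (0 : X) 1)
    (hdec : Antitone F) (hspear : ∀ n, IsSpearSet 𝕜 (F n))
    (hdiam : Tendsto (fun n => Metric.diam (F n)) atTop (nhds 0))
    (z : X) (hz : z ∈ ⋂ n, F n) :
    IsSpear 𝕜 z :=
  stmt2_general F hspear hdiam z hz
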